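/- arXiv:1605.02538 — 3 statements merged into one kernel-verified Lean document; each statement's English description precedes it below -/
import Mathlib

section
/- Let X = {(x₁,t₁),...,(xₙ,tₙ)} be a finite subset of ℝ × ℝ₊*. Then there exists a finite subset R of ℝ₊* such that for all ε > 0 there exists r ∈ R such that if 0 < ε ≤ r, then there exist integers p₁,...,pₙ and a positive integer q with |xᵢ - pᵢ/q| ≤ ε·tᵢ and ε·q ≤ tᵢ for all i = 1,...,n. -/
lemma bohr_syndetic {ι : Type} [Fintype ι] (x : ι → ℝ) (c : ℝ) (hc : 0 < c) :
    ∃ g : ℕ, 0 < g ∧ ∀ A : ℕ, ∃ q : ℕ, A < q ∧ q ≤ A + g ∧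
      ∃ P : ι → ℤ, ∀ i, |(q : ℝ) * x i - (P i : ℝ)| ≤ c := by
  classical
  set v : ℕ → ι → ℝ := fun q i => Int.fract ((q : ℝ) * x i) with hv
  have hsub : Set.range v ⊆ Set.pi Set.univ (fun _ : ι => Set.Icc (0:ℝ) 1) := by
    rintro _ ⟨q, rfl⟩ i _
    exact ⟨Int.fract_nonneg _, (Int.fract_lt_one _).le⟩
  have hK : IsCompact (closure (Set.range v)) := by
    have hcpt : IsCompact (Set.pi Set.univ (fun _ : ι => Set.Icc (0:ℝ) 1)) :=
      isCompact_univ_pi fun _ => isCompact_Icc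
    exact hcpt.of_isClosed_subset isClosed_closure
      (closure_minimal hsub (isClosed_set_pi fun i _ => isClosed_Icc))
  have hcover : closure (Set.range v) ⊆ ⋃ q : ℕ, Metric.ball (v q) (c/2) := by
    intro y hy
    rcases Metric.mem_closure_iff.mp hy (c/2) (half_pos hc) with ⟨z, hz, hd⟩
    rcases hz with ⟨q, rfl⟩
    exact Set.mem_iUnion.2 ⟨q, by simpa [Metric.mem_ball, dist_comm] using hd⟩
  obtain ⟨s, hs⟩ := hK.elim_finite_subcover (fun q => Metric.ball (v q) (c/2))
    (fun q => Metric.isOpen_ball) hcover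
  refine ⟨s.sup id + 1, Nat.succ_pos _, fun A => ?_⟩
  set N := A + (s.sup id + 1) with hN
  have hvN : v N ∈ closure (Set.range v) := subset_closure ⟨N, rfl⟩
  rcases Set.mem_iUnion₂.mp (hs hvN) with ⟨j, hjs, hj⟩
  have hjle : j ≤ s.sup id := Finset.le_sup (f := id) hjs
  have hjN : j ≤ N := by omega
  refine ⟨N - j, ?_, ?_, fun i => ⌊(N : ℝ) * x i⌋ - ⌊(j : ℝ) * x i⌋, fun i => ?_⟩
  · omega
  · omega
  · have hcast : ((N - j : ℕ) : ℝ) = (N : ℝ) - (j : ℝ) := by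
      push_cast [Nat.cast_sub hjN]; ring
    have hdist : dist (v N) (v j) < c / 2 := Metric.mem_ball.mp hj
    have hi : dist (v N i) (v j i) ≤ dist (v N) (v j) := dist_le_pi_dist (v N) (v j) i
    have : |v N i - v j i| < c / 2 := by
      rw [← Real.dist_eq]; exact lt_of_le_of_lt hi hdist
    have hexp : ((N - j : ℕ) : ℝ) * x i - ((⌊(N : ℝ) * x i⌋ - ⌊(j : ℝ) * x i⌋ : ℤ) : ℝ)
        = v N i - v j i := by
      rw [hcast]
      simp only [hv, Int.fract]
      push_cast
      ring
    rw [hexp]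
    linarith [this.le, abs_nonneg (v N i - v j i)]

theorem main_classical
    (X : Finset (ℝ × ℝ)) (hX : ∀ z ∈ X, 0 < z.2) :
    ∃ R : Finset ℝ, (∀ r ∈ R, 0 < r) ∧
      ∀ ε : ℝ, 0 < ε → ∃ r ∈ R, (ε ≤ r →
        ∃ (q : ℕ) (p : ℝ × ℝ → ℤ), 0 < q ∧
          ∀ z ∈ X, |z.1 - (p z : ℝ) / q| ≤ ε * z.2 ∧ ε * q ≤ z.2) := by
  classical
  rcases X.eq_empty_or_nonempty with hXe | hXne
  · refine ⟨{1}, by simp, fun ε hε => ⟨1, Finset.mem_singleton_self _, fun _ => ?_⟩⟩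
    exact ⟨1, fun _ => 0, one_pos, by simp [hXe]⟩
  · set t := X.inf' hXne (fun z => z.2) with hts
    have ht : 0 < t := (Finset.lt_inf'_iff _).mpr hX
    have htle : ∀ z ∈ X, t ≤ z.2 := fun z hz => Finset.inf'_le _ hz
    obtain ⟨g, hg, hbohr⟩ := bohr_syndetic (ι := {z : ℝ × ℝ // z ∈ X})
      (fun z => (z : ℝ × ℝ).1) (t^2/2) (by positivity)
    have hg0 : (0:ℝ) < g := by exact_mod_cast hg
    refine ⟨{t / (2*g)}, ?_, fun ε hε => ⟨t / (2*g), Finset.mem_singleton_self _, fun hεr => ?_⟩⟩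
    · intro r hr; rw [Finset.mem_singleton] at hr; subst hr; positivity
    · set A := ⌊t / (2*ε)⌋₊ with hA
      obtain ⟨q, hq1, hq2, P, hP⟩ := hbohr A
      have hq0 : 0 < q := lt_of_le_of_lt (Nat.zero_le A) hq1
      have htε : (0:ℝ) < t / (2*ε) := by positivity
      have hglo : (g:ℝ) ≤ t / (2*ε) := by
        have h1 : ε * (2*(g:ℝ)) ≤ t := (le_div_iff₀ (by positivity)).mp hεr
        rw [le_div_iff₀ (by positivity)]
        nlinarith
      have hAle : (A:ℝ) ≤ t / (2*ε) := Nat.floor_le htε.le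
      have hqlow : t / (2*ε) < (q : ℝ) := by
        have h1 : t / (2*ε) < (A:ℝ) + 1 := Nat.lt_floor_add_one _
        have h2 : (A:ℝ) + 1 ≤ (q:ℝ) := by exact_mod_cast hq1
        linarith
      have hqhigh : (q:ℝ) ≤ t / ε := by
        have : (q:ℝ) ≤ (A:ℝ) + (g:ℝ) := by exact_mod_cast hq2
        have : (q:ℝ) ≤ t/(2*ε) + t/(2*ε) := by linarith
        have heq : t/(2*ε) + t/(2*ε) = t/ε := by field_simp; ring
        linarith [heq ▸ this]
      refine ⟨q, fun z => if h : z ∈ X then P ⟨z, h⟩ else 0, hq0, fun z hz => ?_⟩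
      have htz := htle z hz
      simp only [dif_pos hz]
      have hqR : (0:ℝ) < q := lt_trans htε hqlow
      constructor
      · have hPz := hP ⟨z, hz⟩
        have heq : z.1 - (P ⟨z, hz⟩ : ℝ) / q = ((q:ℝ) * z.1 - (P ⟨z, hz⟩ : ℝ)) / q := by
          field_simp
        rw [heq, abs_div, abs_of_pos hqR]
        have h1 : |(q:ℝ) * z.1 - (P ⟨z, hz⟩ : ℝ)| / q ≤ (t^2/2) / q := by
          gcongr
        have h2 : (t^2/2) / q < (t^2/2) / (t/(2*ε)) :=
          div_lt_div_of_pos_left (by positivity) htε hqlow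
        have h3 : (t^2/2) / (t/(2*ε)) = ε * t := by field_simp
        have h4 : ε * t ≤ ε * z.2 := by nlinarith
        linarith
      · have : ε * q ≤ ε * (t/ε) := by nlinarith
        have : ε * (t/ε) = t := by field_simp
        nlinarith [hqhigh, htz]
end

section
/- Let x₁,...,xₙ be real numbers, t₁,...,tₙ be positive reals, and let t = min(t₁,...,tₙ). There exists ε₀ > 0 such that for every ε with 0 < ε ≤ ε₀ there exist integers p₁,...,pₙ and a positive integer q satisfying |xᵢ - pᵢ/q| ≤ ε·tᵢ for all i and ε·q ≤ t. -/
noncomputable def dI (z : ℝ) : ℝ := |z - round z|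

lemma dI_le (z : ℝ) (k : ℤ) : dI z ≤ |z - k| := round_le z k

lemma dI_nonneg (z : ℝ) : 0 ≤ dI z := abs_nonneg _

lemma dI_add (u v : ℝ) : dI (u + v) ≤ dI u + dI v := by
  calc dI (u + v) ≤ |u + v - ((round u + round v : ℤ) : ℝ)| := dI_le _ _
    _ ≤ |u - round u| + |v - round v| := by
        push_cast
        rw [show u + v - ((round u : ℝ) + round v) = (u - round u) + (v - round v) by ring]
        exact abs_add_le _ _
    _ = dI u + dI v := rfl

lemma cell_close {η : ℝ} (hη : 0 < η) {u v : ℝ}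
    (h : ⌊Int.fract u / η⌋ = ⌊Int.fract v / η⌋) : dI (u - v) ≤ η := by
  have h1 : |Int.fract u / η - Int.fract v / η| < 1 := Int.abs_sub_lt_one_of_floor_eq_floor h
  have h2 : |Int.fract u - Int.fract v| ≤ η := by
    have : Int.fract u - Int.fract v = η * (Int.fract u / η - Int.fract v / η) := by
      field_simp
    rw [this, abs_mul, abs_of_pos hη]
    nlinarith [abs_nonneg (Int.fract u / η - Int.fract v / η)]
  calc dI (u - v) ≤ |u - v - ((⌊u⌋ - ⌊v⌋ : ℤ) : ℝ)| := dI_le _ _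
    _ = |Int.fract u - Int.fract v| := by
        rw [Int.fract, Int.fract]; push_cast; ring_nf
    _ ≤ η := h2

noncomputable def cellMap (n : ℕ) (y : Fin n → ℝ) (η : ℝ) (hη : 0 < η) (k : ℕ) :
    Fin n → Fin (⌈1/η⌉₊) := fun i =>
  ⟨(⌊Int.fract ((k : ℝ) * y i) / η⌋).toNat, by
    have h0 : (0:ℤ) ≤ ⌊Int.fract ((k : ℝ) * y i) / η⌋ :=
      Int.floor_nonneg.mpr (div_nonneg (Int.fract_nonneg _) hη.le)
    have hlt : ⌊Int.fract ((k : ℝ) * y i) / η⌋ < ((⌈1/η⌉₊ : ℕ) : ℤ) := by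
      apply Int.floor_lt.mpr
      have h1 : Int.fract ((k : ℝ) * y i) / η < 1 / η :=
        (div_lt_div_iff_of_pos_right hη).mpr (Int.fract_lt_one _)
      calc Int.fract ((k : ℝ) * y i) / η < 1/η := h1
        _ ≤ ((⌈1/η⌉₊ : ℕ) : ℝ) := Nat.le_ceil _
    omega⟩

lemma cellMap_eq_floor_eq {n : ℕ} {y : Fin n → ℝ} {η : ℝ} {hη : 0 < η} {a b : ℕ}
    (h : cellMap n y η hη a = cellMap n y η hη b) (i : Fin n) :
    ⌊Int.fract ((a : ℝ) * y i) / η⌋ = ⌊Int.fract ((b : ℝ) * y i) / η⌋ := by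
  have := congrFun h i
  have h2 : (⌊Int.fract ((a : ℝ) * y i) / η⌋).toNat = (⌊Int.fract ((b : ℝ) * y i) / η⌋).toNat :=
    congrArg Fin.val this
  have h0 : (0:ℤ) ≤ ⌊Int.fract ((a : ℝ) * y i) / η⌋ :=
    Int.floor_nonneg.mpr (div_nonneg (Int.fract_nonneg _) hη.le)
  have h0' : (0:ℤ) ≤ ⌊Int.fract ((b : ℝ) * y i) / η⌋ :=
    Int.floor_nonneg.mpr (div_nonneg (Int.fract_nonneg _) hη.le)
  omega

lemma lemA (n : ℕ) (y : Fin n → ℝ) {η : ℝ} (hη : 0 < η) :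
    ∃ s : ℕ, 1 ≤ s ∧ ∀ i, dI ((s : ℝ) * y i) ≤ η := by
  obtain ⟨a, b, hab, hc⟩ := Fintype.exists_ne_map_eq_of_card_lt
    (fun k : Fin (⌈1/η⌉₊ ^ n + 1) => cellMap n y η hη (k : ℕ))
    (by simp [Fintype.card_fun])
  have key : ∀ (u v : ℕ), u < v → cellMap n y η hη u = cellMap n y η hη v →
      ∃ s : ℕ, 1 ≤ s ∧ ∀ i, dI ((s : ℝ) * y i) ≤ η := by
    intro u v huv hc
    refine ⟨v - u, by omega, fun i => ?_⟩
    have hcast : ((v - u : ℕ) : ℝ) * y i = (v : ℝ) * y i - (u : ℝ) * y i := by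
      have : ((v - u : ℕ) : ℝ) = (v : ℝ) - u := by
        push_cast [Nat.cast_sub huv.le]; ring
      rw [this]; ring
    rw [hcast]
    exact cell_close hη (cellMap_eq_floor_eq hc.symm i)
  rcases lt_or_gt_of_ne (fun h : (a : ℕ) = (b : ℕ) => hab (Fin.ext h)) with h | h
  · exact key a b h hc
  · exact key b a h hc.symm

lemma lemB (n : ℕ) (x : Fin n → ℝ) {δ : ℝ} (hδ : 0 < δ) :
    ∃ G : ℕ, ∀ m : ℕ, 1 ≤ m → ∃ q : ℕ, m ≤ q ∧ q ≤ m + G ∧ ∀ i, dI ((q : ℝ) * x i) ≤ δ := by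
  have hη : 0 < δ / 2 := by linarith
  set η := δ / 2 with hηdef
  set c := cellMap n x η hη with hc
  set inv := Function.invFun c with hinv
  refine ⟨Finset.univ.sup inv, fun m hm => ?_⟩
  -- find w = s * m with small fractional parts
  obtain ⟨s, hs, hsy⟩ := lemA n (fun i => (m : ℝ) * x i) hη
  set r := s * m - m with hr
  have hrm : r + m = s * m := by
    have : m ≤ s * m := Nat.le_mul_of_pos_left m (by omega)
    omega
  set q' := inv (c r) with hq'
  have hcq : c q' = c r := Function.invFun_eq ⟨r, rfl⟩
  refine ⟨m + q', by omega, by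
      have : inv (c r) ≤ Finset.univ.sup inv := Finset.le_sup (Finset.mem_univ (c r))
      rw [hq']
      omega, fun i => ?_⟩
  have hsplit : ((m + q' : ℕ) : ℝ) * x i
      = ((r + m : ℕ) : ℝ) * x i + ((q' : ℝ) * x i - (r : ℝ) * x i) := by
    push_cast; ring
  rw [hsplit]
  have h1 : dI (((r + m : ℕ) : ℝ) * x i) ≤ η := by
    rw [hrm]
    have : ((s * m : ℕ) : ℝ) * x i = (s : ℝ) * ((m : ℝ) * x i) := by push_cast; ring
    rw [this]; exact hsy i
  have h2 : dI ((q' : ℝ) * x i - (r : ℝ) * x i) ≤ η :=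
    cell_close hη (cellMap_eq_floor_eq hcq i)
  calc dI _ ≤ dI (((r + m : ℕ) : ℝ) * x i) + dI ((q' : ℝ) * x i - (r : ℝ) * x i) := dI_add _ _
    _ ≤ η + η := add_le_add h1 h2
    _ = δ := by rw [hηdef]; ring

theorem main_eps0 (n : ℕ) (x : Fin n → ℝ) (t : Fin n → ℝ) (ht : ∀ i, 0 < t i) :
    ∃ ε₀ : ℝ, 0 < ε₀ ∧
      ∀ ε : ℝ, 0 < ε → ε ≤ ε₀ →
        ∃ (q : ℕ) (p : Fin n → ℤ), 0 < q ∧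
          (∀ i, |x i - (p i : ℝ) / q| ≤ ε * t i) ∧
          (∀ i, ε * q ≤ t i) := by
  rcases Nat.eq_zero_or_pos n with hn | hn
  · subst hn
    exact ⟨1, one_pos, fun ε hε _ =>
      ⟨1, fun i => i.elim0, one_pos, fun i => i.elim0, fun i => i.elim0⟩⟩
  haveI : NeZero n := ⟨hn.ne'⟩
  have huniv : (Finset.univ : Finset (Fin n)).Nonempty := Finset.univ_nonempty
  set tm := Finset.univ.inf' huniv t with htm
  have htm_le : ∀ i, tm ≤ t i := fun i => Finset.inf'_le _ (Finset.mem_univ i)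
  have htm_pos : 0 < tm := by
    obtain ⟨j, _, hj⟩ := Finset.exists_mem_eq_inf' huniv t
    rw [htm, hj]; exact ht j
  have hδ : 0 < tm ^ 2 / 4 := by positivity
  obtain ⟨G, hG⟩ := lemB n x hδ
  refine ⟨tm / (2 * G + 4), by positivity, fun ε hε hεle => ?_⟩
  have hQdef : tm / ε * ε = tm := div_mul_cancel₀ tm hε.ne'
  set Q := tm / ε with hQ
  have hQge : (2 * G + 4 : ℝ) ≤ Q := by
    rw [hQ, le_div_iff₀ hε]
    calc (2 * G + 4 : ℝ) * ε ≤ (2 * G + 4) * (tm / (2 * G + 4)) := by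
          apply mul_le_mul_of_nonneg_left hεle (by positivity)
      _ = tm := by field_simp
  set m := ⌊Q / 2⌋₊ with hm
  have hm1 : 1 ≤ m := by
    apply Nat.le_floor
    push_cast
    linarith
  obtain ⟨q, hmq, hqG, hq⟩ := hG m hm1
  have hq0 : 0 < q := by omega
  have hq0' : (0 : ℝ) < q := by exact_mod_cast hq0
  have hmle : (m : ℝ) ≤ Q / 2 := Nat.floor_le (by positivity)
  have hmgt : Q / 2 < (m : ℝ) + 1 := Nat.lt_floor_add_one _
  have hqQm : (q : ℝ) ≤ (m : ℝ) + G := by exact_mod_cast hqG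
  have hmq' : (m : ℝ) ≤ q := by exact_mod_cast hmq
  have hqQ : (q : ℝ) ≤ Q := by linarith
  have hε4 : ε ≤ tm / 4 := by
    calc ε ≤ tm / (2 * G + 4) := hεle
      _ ≤ tm / 4 := by
        apply div_le_div_of_nonneg_left htm_pos.le (by norm_num) (by linarith)
  have hεm : tm / 4 ≤ ε * m := by
    have h1 : tm / 2 - ε < ε * m := by
      have h5 := mul_lt_mul_of_pos_left hmgt hε
      have h6 : ε * (Q / 2) = tm / 2 := by rw [← hQdef]; ring
      nlinarith
    linarith
  refine ⟨q, fun i => round ((q : ℝ) * x i), hq0, fun i => ?_, fun i => ?_⟩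
  · have hrw : x i - ((round ((q : ℝ) * x i) : ℤ) : ℝ) / q
        = ((q : ℝ) * x i - round ((q : ℝ) * x i)) / q := by
      field_simp
    rw [hrw, abs_div, abs_of_pos hq0']
    rw [div_le_iff₀ hq0']
    have h1 : dI ((q : ℝ) * x i) ≤ tm ^ 2 / 4 := hq i
    have h2 : tm ^ 2 / 4 ≤ ε * t i * q := by
      have h3 : tm / 4 ≤ ε * q := le_trans hεm (by nlinarith)
      have h4 : tm ≤ t i := htm_le i
      nlinarith
    exact le_trans h1 h2
  · have : ε * q ≤ ε * Q := mul_le_mul_of_nonneg_left hqQ hε.le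
    rw [hQ] at this
    rw [mul_comm] at hQdef
    calc ε * q ≤ tm := by rw [← hQdef]; exact this
      _ ≤ t i := htm_le i
end

section
/- If h/k and h'/k' are two consecutive elements of the Farey sequence of order N (with h/k < h'/k'), then k·h' - h·k' = 1. -/
/-- `h/k` is a member of the Farey sequence of order `N`. -/
def FareyMem (N h k : ℕ) : Prop :=
  h ≤ k ∧ k ≤ N ∧ 1 ≤ k ∧ Nat.gcd h k = 1

/-- `h/k < h'/k'` are consecutive elements of the Farey sequence of order `N`. -/
def FareyConsec (N h k h' k' : ℕ) : Prop :=
  FareyMem N h k ∧ FareyMem N h' k' ∧ (h : ℚ) / k < (h' : ℚ) / k' ∧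
    ∀ a b : ℕ, FareyMem N a b →
      ¬ ((h : ℚ) / k < (a : ℚ) / b ∧ (a : ℚ) / b < (h' : ℚ) / k')

/-!
For `h/k ∈ F_N` the solutions of `k a - h b = 1` have `b` running
through a residue class modulo `k`, so one of them has `N - k < b ≤ N`; then `a/b ∈ F_N` and
`a/b > h/k`. Any fraction `h'/k'` with `h/k < h'/k' < a/b` satisfies
`k' = k (a k' - h' b) + b (h' k - h k') ≥ k + b > N`, so `a/b` is the successor of `h/k`,
whence `h'/k' = a/b` and `k h' - h k' = k a - h b = 1`.
-/

theorem natCast_div_lt_natCast_div_iff {a b c d : ℕ} (hb : 0 < b) (hd : 0 < d) :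
    (a : ℚ) / b < c / d ↔ a * d < c * b := by
  rw [div_lt_div_iff₀ (by exact_mod_cast hb) (by exact_mod_cast hd)]
  exact_mod_cast Iff.rfl

theorem Nat.coprime_of_mul_eq_mul_add_one {a b h k : ℕ} (hab : k * a = h * b + 1) :
    Nat.Coprime a b :=
  Nat.isCoprime_iff_coprime.mp ⟨k, -h, by
    linear_combination (by exact_mod_cast hab : (k * a : ℤ) = h * b + 1)⟩

theorem Nat.Coprime.eq_and_eq_of_mul_eq_mul {a b c d : ℕ} (hab : Nat.Coprime a b)
    (hcd : Nat.Coprime c d) (hb : 0 < b) (h : a * d = c * b) : a = c ∧ b = d := by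
  have hbd : b = d := Nat.dvd_antisymm
    (hab.symm.dvd_of_dvd_mul_left ⟨c, by rw [h, mul_comm]⟩)
    (hcd.symm.dvd_of_dvd_mul_left ⟨a, by rw [← h, mul_comm]⟩)
  subst hbd
  exact ⟨Nat.eq_of_mul_eq_mul_right hb h, rfl⟩

theorem Nat.Coprime.exists_mul_eq_mul_add_one_of_le {N h k : ℕ} (hco : Nat.Coprime h k)
    (hk : 0 < k) (hkN : k ≤ N) : ∃ a b : ℕ, k * a = h * b + 1 ∧ b ≤ N ∧ N < b + k := by
  obtain ⟨u, v, huv⟩ := Nat.isCoprime_iff_coprime.mpr hco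
  have hkZ : (0 : ℤ) < k := by exact_mod_cast hk
  -- `b := k q - u` is the representative of `-u (mod k)` in `(N - k, N]`
  set q := (N + u) / k
  have hdiv : k * q + (N + u) % k = N + u := Int.mul_ediv_add_emod (N + u) k
  have hr0 := Int.emod_nonneg (N + u) hkZ.ne'
  have hrk := Int.emod_lt_of_pos (N + u) hkZ
  have hkNZ : (k : ℤ) ≤ N := by exact_mod_cast hkN
  have hb : 0 < k * q - u := by omega
  have ha : 0 < v + h * q := by nlinarith
  lift k * q - u to ℕ using hb.le with b hb_eq
  lift v + h * q to ℕ using ha.le with a ha_eq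
  refine ⟨a, b, ?_, ?_, ?_⟩
  · have : (k : ℤ) * (v + h * q) = h * (k * q - u) + 1 := by linear_combination huv
    rw [← hb_eq, ← ha_eq] at this
    exact_mod_cast this
  all_goals omega

theorem add_le_of_mul_lt_mul_of_mul_lt_mul {h k a b h' k' : ℕ} (hab : k * a = h * b + 1)
    (hlt : h * k' < h' * k) (hgt : h' * b < a * k') : k + b ≤ k' := by
  zify at hab hlt hgt ⊢
  have hk' : (k' : ℤ) = k * (a * k' - h' * b) + b * (h' * k - h * k') := by
    linear_combination (-(k' : ℤ)) * hab
  have hk := (Nat.cast_nonneg k : (0 : ℤ) ≤ k)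
  have hb := (Nat.cast_nonneg b : (0 : ℤ) ≤ b)
  nlinarith

theorem farey_unimodular (N h k h' k' : ℕ) (hc : FareyConsec N h k h' k') :
    (k : ℤ) * h' - (h : ℤ) * k' = 1 := by
  obtain ⟨⟨-, hkN, hk, hco⟩, ⟨hhk', hkN', hk', hco'⟩, hlt, hnone⟩ := hc
  rw [natCast_div_lt_natCast_div_iff hk hk'] at hlt
  have hhk : h < k := by nlinarith
  obtain ⟨a, b, hab, hbN, hNb⟩ := Nat.Coprime.exists_mul_eq_mul_add_one_of_le hco hk hkN
  have hb : 0 < b := by omega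
  have hab_co := Nat.coprime_of_mul_eq_mul_add_one hab
  have hmem : FareyMem N a b := ⟨by nlinarith, hbN, hb, hab_co⟩
  have hlow : h * b < a * k := by linarith
  have hhigh : h' * b ≤ a * k' := by
    have := hnone a b hmem
    rw [natCast_div_lt_natCast_div_iff hk hb, natCast_div_lt_natCast_div_iff hb hk'] at this
    exact le_of_not_gt fun hup => this ⟨hlow, hup⟩
  have heq : a * k' = h' * b := by
    refine le_antisymm ?_ hhigh
    by_contra! hgt
    have := add_le_of_mul_lt_mul_of_mul_lt_mul hab hlt hgt
    omega
  obtain ⟨rfl, rfl⟩ := hab_co.eq_and_eq_of_mul_eq_mul hco' hb heq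
  zify at hab
  linarith
end
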